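/- Over a finite traced poset, a valid crown w is weakly perfectly clustering if and only if the pair (w, w) is weakly perfectly clustering. -/

import Mathlib

/-- `y` covers `x` in the strict order `lt`. -/
def Covers {α : Type*} (lt : α → α → Prop) (x y : α) : Prop :=
  lt x y ∧ ∀ z, lt x z → lt z y → False

/-- `(α, lt, T, mu)` is a finite traced partially ordered set. -/
structure IsTracedPoset {α : Type*} (lt : α → α → Prop) (T : Set (List α)) (mu : α → α) :
    Prop where
  /-- `lt` is irreflexive. -/
  lt_irrefl : ∀ x, ¬ lt x x
  /-- `lt` is transitive. -/
  lt_trans : ∀ x y z, lt x y → lt y z → lt x z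
  /-- Members of `T` are strictly monotone sequences. -/
  mono : ∀ s ∈ T, List.Chain' lt s ∨ List.Chain' (fun x y => lt y x) s
  /-- `T` is closed under subsequences. -/
  subseq_closed : ∀ s ∈ T, ∀ s' : List α, s'.Sublist s → s' ∈ T
  /-- Each element has at most two covers. -/
  covers_le_two : ∀ n a b c, Covers lt n a → Covers lt n b → Covers lt n c →
      a = b ∨ a = c ∨ b = c
  /-- Each element covers at most two elements. -/
  cocovers_le_two : ∀ n a b c, Covers lt a n → Covers lt b n → Covers lt c n →
      a = b ∨ a = c ∨ b = c
  /-- For each pair `(n, m)` there is at most one sequence in `T` from `n` to `m`. -/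
  trace_unique : ∀ (n m : α), ∀ s₁ ∈ T, ∀ s₂ ∈ T,
      s₁.head? = some n → s₁.getLast? = some m →
      s₂.head? = some n → s₂.getLast? = some m → s₁ = s₂
  /-- Consecutive entries of a trace are covers (resp. co-covers). -/
  trace_covers : ∀ s ∈ T, List.Chain' (Covers lt) s ∨ List.Chain' (fun x y => Covers lt y x) s
  /-- For each `m` there is at most one `n > m` with trace `⟨m, n⟩`. -/
  up_unique : ∀ m n n', lt m n → lt m n' → [m, n] ∈ T → [m, n'] ∈ T → n = n'
  /-- For each `m` there is at most one `n < m` with trace `⟨n, m⟩`. -/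
  down_unique : ∀ m n n', lt n m → lt n' m → [n, m] ∈ T → [n', m] ∈ T → n = n'
  /-- `μ` is an involution. -/
  mu_invol : ∀ x, mu (mu x) = x
  /-- `μ` has no fixed points. -/
  mu_nofix : ∀ x, mu x ≠ x
  /-- `μ` is an order isomorphism. -/
  mu_iso : ∀ x y, lt x y ↔ lt (mu x) (mu y)
  /-- If `T_{(n,m)} = ⟨x₁,…,x_N⟩` then `T_{(μ m, μ n)} = ⟨μ x_N,…,μ x₁⟩`. -/
  mu_trace : ∀ s ∈ T, (s.reverse.map mu) ∈ T

/-- The `k`-fold concatenation `w^k`. -/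
def wpow {α : Type*} (w : List α) (k : ℕ) : List α := (List.replicate k w).flatten

/-- A word is primitive if it is not a `k`-fold concatenation of a word for any `k ≥ 2`. -/
def Primitive {α : Type*} (w : List α) : Prop :=
  w ≠ [] ∧ ∀ (u : List α) (k : ℕ), 2 ≤ k → w ≠ wpow u k

/-- `s` is the trace sequence `T_{(a,b)}` (from `a` to `b`) in `T`. -/
def IsTrace {α : Type*} (T : Set (List α)) (a b : α) (s : List α) : Prop :=
  s ∈ T ∧ s.head? = some a ∧ s.getLast? = some b

/-- Alternation of the strict relation `lt` between consecutive letters. -/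
def ZigzagRel {α : Type*} (lt : α → α → Prop) (w : List α) : Prop :=
  (∀ i, (h : i + 1 < w.length) →
      if i % 2 = 0 then lt (w[i]'(by omega)) (w[i + 1]'h)
      else lt (w[i + 1]'h) (w[i]'(by omega))) ∨
  (∀ i, (h : i + 1 < w.length) →
      if i % 2 = 0 then lt (w[i + 1]'h) (w[i]'(by omega))
      else lt (w[i]'(by omega)) (w[i + 1]'h))

/-- Two letters admit a nonempty trace sequence from the first to the second. -/
def HasTrace {α : Type*} (T : Set (List α)) (n m : α) : Prop :=
  ∃ s, IsTrace T n m s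

/-- A valid crown: a nonempty word which, with its first letter appended (so that the
comparisons are taken cyclically), is a zigzag all of whose consecutive pairs admit
nonempty traces. -/
def ValidCrown {α : Type*} (lt : α → α → Prop) (T : Set (List α)) (w : List α) : Prop :=
  w ≠ [] ∧ ZigzagRel lt (w ++ w.take 1) ∧ List.Chain' (HasTrace T) (w ++ w.take 1)

/-- Condition (1) for a pair of crowns: matching configurations `n' z m'` and `n'' z m''`
with `|z| ≥ 1` in cyclic permutations of `w₁^{2|w₂|}` and `w₂^{2|w₁|}`. -/
def PairCond1 {α : Type*} (lt : α → α → Prop) (w₁ w₂ : List α) : Prop :=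
  ∃ (r s : ℕ) (n' m' n'' m'' : α) (z z' z'' : List α),
    (wpow w₁ (2 * w₂.length)).rotate r = n' :: (z ++ m' :: z') ∧
    (wpow w₂ (2 * w₁.length)).rotate s = n'' :: (z ++ m'' :: z'') ∧
    lt n' n'' ∧ lt m' m'' ∧ 1 ≤ z.length

/-- Condition (2) for a pair of crowns: adjacent configurations `n' m'` and `n'' m''`
with intersecting traces in cyclic permutations of `w₁^{2|w₂|}` and `w₂^{2|w₁|}`. -/
def PairCond2 {α : Type*} (lt : α → α → Prop) (T : Set (List α)) (w₁ w₂ : List α) : Prop :=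
  ∃ (r s : ℕ) (n' m' n'' m'' : α) (z' z'' : List α),
    (wpow w₁ (2 * w₂.length)).rotate r = n' :: m' :: z' ∧
    (wpow w₂ (2 * w₁.length)).rotate s = n'' :: m'' :: z'' ∧
    lt n' n'' ∧ lt m' m'' ∧ (lt n' m' ↔ lt n'' m'') ∧
    ∃ s₁ s₂ x, IsTrace T n' m' s₁ ∧ IsTrace T n'' m'' s₂ ∧ x ∈ s₁ ∧ x ∈ s₂

/-- A pair of crowns is weakly perfectly clustering if neither condition holds. -/
def WPCPair {α : Type*} (lt : α → α → Prop) (T : Set (List α)) (w₁ w₂ : List α) : Prop :=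
  ¬ PairCond1 lt w₁ w₂ ∧ ¬ PairCond2 lt T w₁ w₂

/-- Condition (1) for a single crown, on cyclic permutations of `w` itself. -/
def SingleCond1 {α : Type*} (lt : α → α → Prop) (w : List α) : Prop :=
  ∃ (r s : ℕ) (n' m' n'' m'' : α) (z z' z'' : List α),
    w.rotate r = n' :: (z ++ m' :: z') ∧ w.rotate s = n'' :: (z ++ m'' :: z'') ∧
    lt n' n'' ∧ lt m' m'' ∧ 1 ≤ z.length

/-- Condition (2) for a single crown, on cyclic permutations of `w` itself. -/
def SingleCond2 {α : Type*} (lt : α → α → Prop) (T : Set (List α)) (w : List α) : Prop :=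
  ∃ (r s : ℕ) (n' m' n'' m'' : α) (z' z'' : List α),
    w.rotate r = n' :: m' :: z' ∧ w.rotate s = n'' :: m'' :: z'' ∧
    lt n' n'' ∧ lt m' m'' ∧ (lt n' m' ↔ lt n'' m'') ∧
    ∃ s₁ s₂ x, IsTrace T n' m' s₁ ∧ IsTrace T n'' m'' s₂ ∧ x ∈ s₁ ∧ x ∈ s₂

/-- A single crown is weakly perfectly clustering if neither condition holds. -/
def WPCSingle {α : Type*} (lt : α → α → Prop) (T : Set (List α)) (w : List α) : Prop :=
  ¬ SingleCond1 lt w ∧ ¬ SingleCond2 lt T w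


section WPCAux

variable {α : Type*}

lemma wpow_succ (u : List α) (k : ℕ) : wpow u (k+1) = u ++ wpow u k := by
  simp [wpow, List.replicate_succ]

lemma wpow_length (u : List α) (k : ℕ) : (wpow u k).length = k * u.length := by
  induction k with
  | zero => simp [wpow]
  | succ k ih => simp [wpow_succ, ih]; ring

lemma wpow_getElem (u : List α) (k i : ℕ) (h : i < (wpow u k).length) :
    (wpow u k)[i] = u[i % u.length]'(Nat.mod_lt _ (by
      rcases Nat.eq_zero_or_pos u.length with h0 | h0
      · simp [wpow_length, h0] at h
      · exact h0)) := by
  induction k generalizing i with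
  | zero => simp [wpow] at h
  | succ k ih =>
    have hu : 0 < u.length := by
      rcases Nat.eq_zero_or_pos u.length with h0 | h0
      · simp [wpow_length, h0] at h
      · exact h0
    have h' : i < (u ++ wpow u k).length := by rw [← wpow_succ]; exact h
    have heq : wpow u (k+1) = u ++ wpow u k := wpow_succ u k
    rw [List.getElem_of_eq heq, List.getElem_append]
    split
    · congr 1; exact (Nat.mod_eq_of_lt (by assumption)).symm
    · rename_i hge
      push_neg at hge
      rw [ih (i - u.length) (by
        have h2 : (u ++ wpow u k).length = u.length + (wpow u k).length := by simp
        omega)]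
      congr 1
      exact (Nat.mod_eq_sub_mod hge).symm

lemma rotate_wpow (w : List α) (k r : ℕ) :
    (wpow w k).rotate r = wpow (w.rotate (r % w.length)) k := by
  rcases Nat.eq_zero_or_pos w.length with h0 | h0
  · have : w = [] := List.length_eq_zero_iff.mp h0
    subst this; simp [wpow]
  rcases Nat.eq_zero_or_pos k with hk | hk
  · subst hk; simp [wpow]
  apply List.ext_getElem
  · simp [wpow_length]
  intro i h1 h2
  have hlen : (wpow w k).length = k * w.length := wpow_length w k
  have hi : i < k * w.length := by simpa [hlen] using h1
  have hdvd : w.length ∣ (wpow w k).length := by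
    rw [hlen]; exact Dvd.intro_left k rfl
  rw [List.getElem_rotate, wpow_getElem, wpow_getElem, List.getElem_rotate]
  congr 1
  simp only [List.length_rotate]
  rw [Nat.mod_mod_of_dvd _ hdvd, Nat.add_mod]

lemma wpow_prefix {u p q : List α} {k : ℕ} (hk : 1 ≤ k) (h : wpow u k = p ++ q)
    (hp : p.length ≤ u.length) : u = p ++ u.drop p.length := by
  obtain ⟨k', rfl⟩ : ∃ k', k = k' + 1 := ⟨k - 1, by omega⟩
  rw [wpow_succ] at h
  conv_lhs => rw [← List.take_append_drop p.length u]
  congr 1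
  have h1 : (u ++ wpow u k').take p.length = u.take p.length :=
    List.take_append_of_le_length hp
  rw [← h1, h]
  exact List.take_left

lemma take_wpow {u : List α} {k : ℕ} (hk : 1 ≤ k) : (wpow u k).take u.length = u := by
  obtain ⟨k', rfl⟩ : ∃ k', k = k' + 1 := ⟨k - 1, by omega⟩
  rw [wpow_succ]
  exact List.take_left

lemma crown_two_le_length {lt : α → α → Prop} {T : Set (List α)} {w : List α}
    (hirr : ∀ x, ¬ lt x x) (hcrown : ValidCrown lt T w) : 2 ≤ w.length := by
  obtain ⟨hne, hzig, -⟩ := hcrown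
  have h1 : 1 ≤ w.length := List.length_pos_iff.mpr hne
  by_contra hlt
  have : w.length = 1 := by omega
  obtain ⟨a, rfl⟩ := List.length_eq_one_iff.mp this
  rcases hzig with hz | hz
  · have := hz 0 (by simp)
    simp at this
    exact hirr a this
  · have := hz 0 (by simp)
    simp at this
    exact hirr a this

lemma singleCond1_iff_pairCond1 {lt : α → α → Prop} {w : List α}
    (hirr : ∀ x, ¬ lt x x) (hne : w ≠ []) :
    SingleCond1 lt w ↔ PairCond1 lt w w := by
  have hL : 1 ≤ w.length := List.length_pos_iff.mpr hne
  have hK : 1 ≤ 2 * w.length := by omega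
  constructor
  · rintro ⟨r, s, n', m', n'', m'', z, z', z'', hr, hs, h1, h2, h3⟩
    obtain ⟨k', hk'⟩ : ∃ k', 2 * w.length = k' + 1 := ⟨2 * w.length - 1, by omega⟩
    refine ⟨r, s, n', m', n'', m'', z,
      z' ++ wpow (w.rotate r) k', z'' ++ wpow (w.rotate s) k', ?_, ?_, h1, h2, h3⟩
    · rw [rotate_wpow, List.rotate_mod, hk', wpow_succ, hr]
      simp
    · rw [rotate_wpow, List.rotate_mod, hk', wpow_succ, hs]
      simp
  · rintro ⟨r, s, n', m', n'', m'', z, z', z'', hr, hs, h1, h2, h3⟩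
    rw [rotate_wpow] at hr hs
    set u := w.rotate (r % w.length) with hu
    set v := w.rotate (s % w.length) with hv
    have hul : u.length = w.length := List.length_rotate w _
    have hvl : v.length = w.length := List.length_rotate w _
    by_cases hA : z.length + 2 ≤ w.length
    · have hru : u = (n' :: (z ++ [m'])) ++ u.drop (n' :: (z ++ [m'])).length := by
        refine wpow_prefix (q := z') hK (by rw [hr]; simp) (by simp; omega)
      have hrv : v = (n'' :: (z ++ [m''])) ++ v.drop (n'' :: (z ++ [m''])).length := by
        refine wpow_prefix (q := z'') hK (by rw [hs]; simp) (by simp; omega)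
      refine ⟨r % w.length, s % w.length, n', m', n'', m'', z,
        u.drop (n' :: (z ++ [m'])).length, v.drop (n'' :: (z ++ [m''])).length, ?_, ?_,
        h1, h2, h3⟩
      · rw [← hu, hru]; simp
      · rw [← hv, hrv]; simp
    · exfalso
      push_neg at hA
      have hzl : w.length - 1 ≤ z.length := by omega
      obtain ⟨L', hL'⟩ : ∃ L', w.length = L' + 1 := ⟨w.length - 1, by omega⟩
      have hueq : u = n' :: z.take L' := by
        have := take_wpow (u := u) (k := 2 * w.length) hK
        rw [hr, hul, hL', List.take_succ_cons, List.take_append_of_le_length (by omega)]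
          at this
        exact this.symm
      have hveq : v = n'' :: z.take L' := by
        have := take_wpow (u := v) (k := 2 * w.length) hK
        rw [hs, hvl, hL', List.take_succ_cons, List.take_append_of_le_length (by omega)]
          at this
        exact this.symm
      have hperm : u.Perm v := ((List.rotate_perm w _).trans (List.rotate_perm w _).symm)
      have hne' : n' ≠ n'' := by
        intro heq; subst heq; exact hirr n' h1
      classical
      have hcount := hperm.count_eq n'
      rw [hueq, hveq, List.count_cons_self, List.count_cons_of_ne hne'.symm] at hcount
      omega

lemma singleCond2_iff_pairCond2 {lt : α → α → Prop} {T : Set (List α)} {w : List α}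
    (hirr : ∀ x, ¬ lt x x) (hL2 : 2 ≤ w.length) :
    SingleCond2 lt T w ↔ PairCond2 lt T w w := by
  have hL : 1 ≤ w.length := by omega
  have hK : 1 ≤ 2 * w.length := by omega
  constructor
  · rintro ⟨r, s, n', m', n'', m'', z', z'', hr, hs, h1, h2, h3, h4⟩
    obtain ⟨k', hk'⟩ : ∃ k', 2 * w.length = k' + 1 := ⟨2 * w.length - 1, by omega⟩
    refine ⟨r, s, n', m', n'', m'',
      z' ++ wpow (w.rotate r) k', z'' ++ wpow (w.rotate s) k', ?_, ?_, h1, h2, h3, h4⟩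
    · rw [rotate_wpow, List.rotate_mod, hk', wpow_succ, hr]
      simp
    · rw [rotate_wpow, List.rotate_mod, hk', wpow_succ, hs]
      simp
  · rintro ⟨r, s, n', m', n'', m'', z', z'', hr, hs, h1, h2, h3, h4⟩
    rw [rotate_wpow] at hr hs
    set u := w.rotate (r % w.length) with hu
    set v := w.rotate (s % w.length) with hv
    have hru : u = [n', m'] ++ u.drop 2 := by
      have := wpow_prefix (p := [n', m']) (q := z') hK (by rw [hr]; simp) (by rw [hu]; simp; omega)
      simpa using this
    have hrv : v = [n'', m''] ++ v.drop 2 := by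
      have := wpow_prefix (p := [n'', m'']) (q := z'') hK (by rw [hs]; simp) (by rw [hv]; simp; omega)
      simpa using this
    exact ⟨r % w.length, s % w.length, n', m', n'', m'', u.drop 2, v.drop 2,
      by rw [← hu, hru]; simp, by rw [← hv, hrv]; simp, h1, h2, h3, h4⟩

end WPCAux

/-- Over a finite traced poset, a primitive valid crown `w` is weakly perfectly
clustering if and only if the pair `(w, w)` is weakly perfectly clustering. -/
theorem wpcSingle_iff_wpcPair_self {α : Type*} [Fintype α]
    (lt : α → α → Prop) (T : Set (List α)) (mu : α → α)
    (h : IsTracedPoset lt T mu) (w : List α)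
    (hprim : Primitive w) (hcrown : ValidCrown lt T w) :
    WPCSingle lt T w ↔ WPCPair lt T w w := by
  have hirr := h.lt_irrefl
  have hne : w ≠ [] := hcrown.1
  have hL2 : 2 ≤ w.length := crown_two_le_length hirr hcrown
  have e1 := singleCond1_iff_pairCond1 (lt := lt) (w := w) hirr hne
  have e2 := singleCond2_iff_pairCond2 (lt := lt) (T := T) (w := w) hirr hL2
  unfold WPCSingle WPCPair
  rw [e1, e2]
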